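/- For p ≥ r ≥ 1 and λ = ⟨p+1, r⟩, the rank-generating function of partitions with distinct parts contained inside λ satisfies F_⟨p+1,r⟩(q) = 1 + q·G_{(p,r)}(q), where G_{(p,r)}(q) is the rank-generating function of arbitrary partitions μ with μ_1 ≤ p, μ_2 ≤ r, μ_1 ≥ μ_2 ≥ 0. -/
import Mathlib


/-- `μ` is a partition with distinct parts (strictly decreasing positive parts,
followed by a tail of zeros), encoded as a function `Fin b → ℕ`. -/
def DistinctParts {b : ℕ} (μ : Fin b → ℕ) : Prop :=
  ∀ i j : Fin b, i < j → μ j = 0 ∨ μ j < μ i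

/-- `μ` is a partition with distinct parts contained inside the shifted shape `lam`. -/
def FitsD {b : ℕ} (lam μ : Fin b → ℕ) : Prop :=
  DistinctParts μ ∧ ∀ i, μ i ≤ lam i

/-- The coefficient of `q^k` in the rank-generating function `F_lam`:
the number of partitions with distinct parts of size `k` contained inside `lam`. -/
noncomputable def Fcoeff {b : ℕ} (lam : Fin b → ℕ) (k : ℕ) : ℕ :=
  Nat.card {μ : Fin b → ℕ // FitsD lam μ ∧ ∑ i, μ i = k}

/-- The coefficient of `q^k` in the rank-generating function `G_lam` of arbitrary
partitions contained inside the straight Ferrers shape `lam`. -/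
noncomputable def Gcoeff {b : ℕ} (lam : Fin b → ℕ) (k : ℕ) : ℕ :=
  Nat.card {μ : Fin b → ℕ // Antitone μ ∧ (∀ i, μ i ≤ lam i) ∧ ∑ i, μ i = k}

/-- The coefficient of `q^i` in the Gaussian binomial coefficient `(m choose k)_q`,
which is the rank-generating function of partitions inside a `k × (m-k)` rectangle. -/
noncomputable def gaussCoeff (m k i : ℕ) : ℕ :=
  Gcoeff (fun _ : Fin k => m - k) i

lemma distinct_two_iff (μ : Fin 2 → ℕ) :
    DistinctParts μ ↔ (μ 1 = 0 ∨ μ 1 < μ 0) := by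
  constructor
  · intro h; exact h 0 1 (by decide)
  · intro h i j hij
    fin_cases i <;> fin_cases j <;> simp_all <;> omega

lemma antitone_two_iff (μ : Fin 2 → ℕ) :
    Antitone μ ↔ μ 1 ≤ μ 0 := by
  constructor
  · intro h; exact h (by decide : (0:Fin 2) ≤ 1)
  · intro h i j hij
    fin_cases i <;> fin_cases j <;> simp_all

/-- For `p ≥ r ≥ 1` and `λ = ⟨p+1, r⟩`, `F_λ(q) = 1 + q · G_{(p,r)}(q)`,
stated coefficientwise. -/
theorem two_parts_decomposition (p r : ℕ) (hrp : r ≤ p) (hr : 1 ≤ r) :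
    Fcoeff ![p + 1, r] 0 = 1 ∧
    ∀ k : ℕ, Fcoeff ![p + 1, r] (k + 1) = Gcoeff ![p, r] k := by
  constructor
  · rw [Fcoeff]
    have : Unique {μ : Fin 2 → ℕ // FitsD ![p + 1, r] μ ∧ ∑ i, μ i = 0} := by
      refine ⟨⟨⟨![0, 0], ?_, ?_⟩⟩, ?_⟩
      · exact ⟨(distinct_two_iff _).2 (by simp), fun i => by fin_cases i <;> simp⟩
      · simp [Fin.sum_univ_two]
      · rintro ⟨μ, _, hsum⟩
        rw [Fin.sum_univ_two] at hsum
        ext i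
        fin_cases i <;> simp <;> omega
    exact Nat.card_unique
  · intro k
    rw [Fcoeff, Gcoeff]
    apply Nat.card_congr
    refine ⟨fun μ => ⟨![μ.1 0 - 1, μ.1 1], ?_⟩, fun ν => ⟨![ν.1 0 + 1, ν.1 1], ?_⟩, ?_, ?_⟩
    · obtain ⟨μ, ⟨hd, hle⟩, hsum⟩ := μ
      rw [distinct_two_iff] at hd
      rw [Fin.sum_univ_two] at hsum
      have h0 := hle 0
      have h1 := hle 1
      simp only [Matrix.cons_val_zero, Matrix.cons_val_one, Matrix.head_cons] at h0 h1
      refine ⟨(antitone_two_iff _).2 ?_, fun i => ?_, ?_⟩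
      · simp; omega
      · fin_cases i <;> simp <;> omega
      · rw [Fin.sum_univ_two]; simp; omega
    · obtain ⟨ν, ha, hle, hsum⟩ := ν
      rw [antitone_two_iff] at ha
      rw [Fin.sum_univ_two] at hsum
      have h0 := hle 0
      have h1 := hle 1
      simp only [Matrix.cons_val_zero, Matrix.cons_val_one, Matrix.head_cons] at h0 h1
      refine ⟨⟨(distinct_two_iff _).2 ?_, fun i => ?_⟩, ?_⟩
      · simp; omega
      · fin_cases i <;> simp <;> omega
      · rw [Fin.sum_univ_two]; simp; omega
    · rintro ⟨μ, ⟨hd, hle⟩, hsum⟩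
      rw [distinct_two_iff] at hd
      rw [Fin.sum_univ_two] at hsum
      have hμ0 : 1 ≤ μ 0 := by omega
      ext i
      fin_cases i <;> simp <;> omega
    · rintro ⟨ν, ha, hle, hsum⟩
      ext i
      fin_cases i <;> simp
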